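/- Fix a natural number n and define, for complex s with Re(s) > 0, h_{n+1}(s) = (−1)^{n+1} s^{−(2n+2)} ∫_0^∞ [t/(e^{2πt} − 1)] ∫_0^{t²} y^{n+1}/(y + s²) dy dt. Then the double integral converges absolutely for every s with Re(s) > 0, h_{n+1} is holomorphic on the half-plane Re(s) > 0, and for every natural number j there exist constants C > 0 and σ_0 > 0 such that |h_{n+1}^{(j)}(s)| ≤ C |s|^{−(2n+2+j)} for all s with Re(s) ≥ σ_0. -/

import Mathlib

/-!
Write `F_k(s) = ∫ w / (y + s²)^(k+1)` for the weight `w = t/(e^{2πt} - 1) · y^{n+1}` on the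
region `0 < y ≤ t²`, so that `h_{n+1}(s) = ± s^{-(2n+2)} F_0(s)`. Since
`y + s² = (s + i√y)(s - i√y)`, we have `|y + s²| ≥ (Re s)²`; this gives absolute convergence and
differentiation under the integral sign, `F_k' = -2(k+1) s F_{k+1}`. Hence the `j`-th derivative of
`h_{n+1}` is a linear combination of terms `s^m F_k` with `m - 2k - 2 ≤ -(2n+2+j)`. Finally, for
`Re s ≥ 1` one has `|s|² ≤ (1 + y) |y + s²|`, so `|F_k(s)| ≤ C_k |s|^{-(2k+2)}`, the constant being
a moment of `w`, finite because the kernel decays exponentially.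
-/

open Complex Real MeasureTheory

/-- The remainder term `h_{n+1}(s)` in the asymptotic expansion of `log G(s+1)`:
`h_{n+1}(s) = (−1)^{n+1} s^{−(2n+2)} ∫_0^∞ t/(e^{2πt} − 1) ∫_0^{t²} y^{n+1}/(y + s²) dy dt`. -/
noncomputable def hRem (n : ℕ) (s : ℂ) : ℂ :=
  (-1) ^ (n + 1) * s ^ (-(2 * (n : ℤ) + 2)) *
    ∫ t in Set.Ioi (0 : ℝ),
      ((t / (Real.exp (2 * Real.pi * t) - 1) : ℝ) : ℂ) *
        ∫ y in Set.Ioc (0 : ℝ) (t ^ 2), (y : ℂ) ^ (n + 1) / ((y : ℂ) + s ^ 2)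

open Set Filter Topology Metric

namespace Complex

theorem sq_re_le_norm_ofReal_add_sq (s : ℂ) {y : ℝ} (hy : 0 ≤ y) :
    s.re ^ 2 ≤ ‖(y : ℂ) + s ^ 2‖ := by
  have hfactor : (y : ℂ) + s ^ 2 = (s + √y * I) * (s - √y * I) := by
    have : ((√y : ℝ) : ℂ) ^ 2 = y := by rw [← ofReal_pow, Real.sq_sqrt hy]
    linear_combination (-1 : ℂ) * this + (√y : ℂ) ^ 2 * I_sq
  have hplus : |s.re| ≤ ‖s + √y * I‖ := by simpa using abs_re_le_norm (s + √y * I)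
  have hminus : |s.re| ≤ ‖s - √y * I‖ := by simpa using abs_re_le_norm (s - √y * I)
  rw [hfactor, norm_mul, ← sq_abs, sq]
  exact mul_le_mul hplus hminus (abs_nonneg _) (norm_nonneg _)

theorem norm_sq_le_one_add_mul_norm_ofReal_add_sq {s : ℂ} (hs : 1 ≤ s.re) {y : ℝ} (hy : 0 ≤ y) :
    ‖s‖ ^ 2 ≤ (1 + y) * ‖(y : ℂ) + s ^ 2‖ := by
  have htri : ‖s‖ ^ 2 ≤ ‖(y : ℂ) + s ^ 2‖ + y := by
    calc ‖s‖ ^ 2 = ‖((y : ℂ) + s ^ 2) - y‖ := by rw [add_sub_cancel_left, norm_pow]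
      _ ≤ ‖(y : ℂ) + s ^ 2‖ + ‖(y : ℂ)‖ := norm_sub_le _ _
      _ = ‖(y : ℂ) + s ^ 2‖ + y := by rw [norm_real, Real.norm_of_nonneg hy]
  have hone : 1 ≤ ‖(y : ℂ) + s ^ 2‖ :=
    (one_le_pow₀ hs).trans (sq_re_le_norm_ofReal_add_sq s hy)
  nlinarith

theorem sub_lt_re_of_mem_ball {s s₀ : ℂ} {r : ℝ} (hs : s ∈ ball s₀ r) : s₀.re - r < s.re := by
  have hre := abs_re_le_norm (s - s₀)
  rw [sub_re] at hre
  rw [mem_ball, dist_eq_norm] at hs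
  linarith [neg_abs_le (s.re - s₀.re)]

theorem norm_div_ofReal_add_sq_pow_le {s : ℂ} {r : ℝ} (hr : 0 < r) (hrs : r ≤ s.re) {y : ℝ}
    (hy : 0 ≤ y) (c : ℂ) (m : ℕ) : ‖c / ((y : ℂ) + s ^ 2) ^ m‖ ≤ ‖c‖ / (r ^ 2) ^ m := by
  rw [norm_div, norm_pow]
  gcongr
  exact (pow_le_pow_left₀ hr.le hrs 2).trans (sq_re_le_norm_ofReal_add_sq s hy)

end Complex

section StieltjesSq

variable {α : Type*} [MeasurableSpace α] {μ : Measure α} {w : α → ℂ} {y : α → ℝ}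

structure HasFiniteMoments (μ : Measure α) (w : α → ℂ) (y : α → ℝ) : Prop where
  aestronglyMeasurable : AEStronglyMeasurable w μ
  aemeasurable : AEMeasurable y μ
  ae_nonneg : ∀ᵐ a ∂μ, 0 ≤ y a
  integrable_norm_mul_pow : ∀ k : ℕ, Integrable (fun a => ‖w a‖ * (1 + y a) ^ k) μ

noncomputable def stieltjesSq (μ : Measure α) (w : α → ℂ) (y : α → ℝ) (k : ℕ) (s : ℂ) : ℂ :=
  ∫ a, w a / ((y a : ℂ) + s ^ 2) ^ (k + 1) ∂μ

/-- The index `d` is an order of decay: members are `O(‖s‖ ^ (-d))` as `re s → ∞`, and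
differentiation raises `d` by one. -/
def stieltjesSqSpan (μ : Measure α) (w : α → ℂ) (y : α → ℝ) (d : ℤ) : Submodule ℂ (ℂ → ℂ) :=
  Submodule.span ℂ
    {f | ∃ (m : ℤ) (k : ℕ), m + d ≤ 2 * k + 2 ∧ f = fun s => s ^ m * stieltjesSq μ w y k s}

namespace HasFiniteMoments

theorem aestronglyMeasurable_div (h : HasFiniteMoments μ w y) (s : ℂ) (m : ℕ) :
    AEStronglyMeasurable (fun a => w a / ((y a : ℂ) + s ^ 2) ^ m) μ :=
  h.aestronglyMeasurable.div₀ (((measurable_ofReal.comp_aemeasurable h.aemeasurable).add_const _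
    ).pow_const _).aestronglyMeasurable

theorem integrable_div (h : HasFiniteMoments μ w y) {s : ℂ} (hs : 0 < s.re) (m : ℕ) :
    Integrable (fun a => w a / ((y a : ℂ) + s ^ 2) ^ m) μ := by
  refine ((h.integrable_norm_mul_pow 0).div_const ((s.re ^ 2) ^ m)).mono'
    (h.aestronglyMeasurable_div s m) ?_
  filter_upwards [h.ae_nonneg] with a ha
  simpa using norm_div_ofReal_add_sq_pow_le hs le_rfl ha (w a) m

theorem hasDerivAt_stieltjesSq (h : HasFiniteMoments μ w y) (k : ℕ) {s₀ : ℂ} (hs₀ : 0 < s₀.re) :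
    HasDerivAt (stieltjesSq μ w y k)
      (-2 * (k + 1) * s₀ * stieltjesSq μ w y (k + 1) s₀) s₀ := by
  set r := s₀.re / 2 with hr_def
  have hr : 0 < r := half_pos hs₀
  have hball : ∀ s ∈ ball s₀ r, r ≤ s.re := fun s hs => by linarith [sub_lt_re_of_mem_ball hs]
  have hparam := hasDerivAt_integral_of_dominated_loc_of_deriv_le (μ := μ) (ball_mem_nhds s₀ hr)
    (F := fun s a => w a / ((y a : ℂ) + s ^ 2) ^ (k + 1))
    (F' := fun s a => -2 * (k + 1) * s * (w a / ((y a : ℂ) + s ^ 2) ^ (k + 1 + 1)))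
    (bound := fun a => 2 * (k + 1) * (‖s₀‖ + r) * (‖w a‖ / (r ^ 2) ^ (k + 2)))
    (Eventually.of_forall fun s => h.aestronglyMeasurable_div s _) (h.integrable_div hs₀ _)
    ((h.aestronglyMeasurable_div s₀ _).const_mul _) ?bound
    (by simpa using ((h.integrable_norm_mul_pow 0).div_const _).const_mul _) ?deriv
  case bound =>
    filter_upwards [h.ae_nonneg] with a ha s hs
    have hk : ‖(-2 * (k + 1) : ℂ)‖ = 2 * (k + 1) := by
      rw [norm_mul, norm_neg, ← Nat.cast_add_one, Complex.norm_natCast]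
      norm_num
    rw [norm_mul, norm_mul, hk]
    gcongr
    · exact (norm_lt_of_mem_ball hs).le
    · exact norm_div_ofReal_add_sq_pow_le hr (hball s hs) ha _ _
  case deriv =>
    filter_upwards [h.ae_nonneg] with a ha s hs
    have hne : (y a : ℂ) + s ^ 2 ≠ 0 := by
      refine norm_pos_iff.1 ?_
      exact (pow_pos (hr.trans_le (hball s hs)) 2).trans_le (sq_re_le_norm_ofReal_add_sq s ha)
    have hpow := ((hasDerivAt_pow 2 s).const_add (y a : ℂ)).fun_pow (k + 1)
    refine ((hasDerivAt_const s (w a)).fun_div hpow (pow_ne_zero _ hne)).congr_deriv ?_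
    rw [Nat.add_sub_cancel]
    field_simp
    push_cast
    ring
  unfold stieltjesSq
  rw [← integral_const_mul]
  exact hparam.2

theorem norm_stieltjesSq_le (h : HasFiniteMoments μ w y) (k : ℕ) {s : ℂ} (hs : 1 ≤ s.re) :
    ‖stieltjesSq μ w y k s‖ ≤
      (∫ a, ‖w a‖ * (1 + y a) ^ (k + 1) ∂μ) * ‖s‖ ^ (-(2 * k + 2 : ℤ)) := by
  have hs0 : 0 < ‖s‖ := one_pos.trans_le (hs.trans (re_le_norm s))
  have hzpow : ‖s‖ ^ (-(2 * k + 2 : ℤ)) = ((‖s‖ ^ 2) ^ (k + 1))⁻¹ := by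
    rw [← pow_mul, zpow_neg, ← zpow_natCast]
    push_cast
    ring_nf
  rw [hzpow, ← div_eq_mul_inv, ← integral_div]
  refine norm_integral_le_of_norm_le ((h.integrable_norm_mul_pow _).div_const _) ?_
  filter_upwards [h.ae_nonneg] with a ha
  have hpos : 0 < ‖(y a : ℂ) + s ^ 2‖ :=
    one_pos.trans_le ((one_le_pow₀ hs).trans (sq_re_le_norm_ofReal_add_sq s ha))
  rw [norm_div, norm_pow, div_le_div_iff₀ (by positivity) (by positivity), mul_assoc, ← mul_pow]
  gcongr
  exact norm_sq_le_one_add_mul_norm_ofReal_add_sq hs ha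

theorem hasDerivAt_zpow_mul_stieltjesSq (h : HasFiniteMoments μ w y) (m : ℤ) (k : ℕ) {s : ℂ}
    (hs : 0 < s.re) :
    HasDerivAt (fun s => s ^ m * stieltjesSq μ w y k s)
      (m * (s ^ (m - 1) * stieltjesSq μ w y k s) +
        -2 * (k + 1) * (s ^ (m + 1) * stieltjesSq μ w y (k + 1) s)) s := by
  have hs0 : s ≠ 0 := fun h0 => by simp [h0] at hs
  refine ((hasDerivAt_zpow m s (Or.inl hs0)).mul (h.hasDerivAt_stieltjesSq k hs)).congr_deriv ?_
  rw [zpow_add_one₀ hs0]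
  ring

theorem differentiableOn_of_mem_span (h : HasFiniteMoments μ w y) {d : ℤ} {f : ℂ → ℂ}
    (hf : f ∈ stieltjesSqSpan μ w y d) : DifferentiableOn ℂ f {s | 0 < s.re} := by
  induction hf using Submodule.span_induction with
  | mem f hf =>
    obtain ⟨m, k, -, rfl⟩ := hf
    exact fun s hs =>
      (h.hasDerivAt_zpow_mul_stieltjesSq m k hs).differentiableAt.differentiableWithinAt
  | zero => exact differentiableOn_const 0
  | add f g _ _ hf hg => exact hf.add hg
  | smul c f _ hf => exact hf.const_smul c

theorem exists_eqOn_deriv_of_mem_span (h : HasFiniteMoments μ w y) {d : ℤ} {f : ℂ → ℂ}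
    (hf : f ∈ stieltjesSqSpan μ w y d) :
    ∃ g ∈ stieltjesSqSpan μ w y (d + 1), EqOn (deriv f) g {s | 0 < s.re} := by
  have hU : IsOpen {s : ℂ | 0 < s.re} := isOpen_lt continuous_const continuous_re
  induction hf using Submodule.span_induction with
  | mem f hf =>
    obtain ⟨m, k, hmk, rfl⟩ := hf
    refine ⟨(m : ℂ) • (fun s => s ^ (m - 1) * stieltjesSq μ w y k s) +
      (-2 * (k + 1) : ℂ) • (fun s => s ^ (m + 1) * stieltjesSq μ w y (k + 1) s),
      add_mem (Submodule.smul_mem _ _ (Submodule.subset_span ⟨m - 1, k, by omega, rfl⟩))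
        (Submodule.smul_mem _ _ (Submodule.subset_span ⟨m + 1, k + 1, by push_cast; omega, rfl⟩)),
      fun s hs => ?_⟩
    simp only [(h.hasDerivAt_zpow_mul_stieltjesSq m k hs).deriv, Pi.add_apply, Pi.smul_apply,
      smul_eq_mul]
  | zero => exact ⟨0, zero_mem _, fun s _ => deriv_const s 0⟩
  | add f g hf' hg' hf hg =>
    obtain ⟨F, hF, hfF⟩ := hf
    obtain ⟨G, hG, hgG⟩ := hg
    refine ⟨F + G, add_mem hF hG, fun s hs => ?_⟩
    have hU' := hU.mem_nhds hs
    rw [deriv_add ((h.differentiableOn_of_mem_span hf').differentiableAt hU')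
      ((h.differentiableOn_of_mem_span hg').differentiableAt hU'), hfF hs, hgG hs, Pi.add_apply]
  | smul c f hf' hf =>
    obtain ⟨F, hF, hfF⟩ := hf
    refine ⟨c • F, Submodule.smul_mem _ c hF, fun s hs => ?_⟩
    rw [deriv_const_smul c ((h.differentiableOn_of_mem_span hf').differentiableAt
      (hU.mem_nhds hs)), hfF hs, Pi.smul_apply]

theorem exists_eqOn_iteratedDeriv (h : HasFiniteMoments μ w y) {d : ℤ} {f : ℂ → ℂ}
    (hf : ∃ g ∈ stieltjesSqSpan μ w y d, EqOn f g {s | 0 < s.re}) (j : ℕ) :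
    ∃ g ∈ stieltjesSqSpan μ w y (d + j), EqOn (iteratedDeriv j f) g {s | 0 < s.re} := by
  induction j with
  | zero => simpa using hf
  | succ j ih =>
    obtain ⟨g, hg, hfg⟩ := ih
    obtain ⟨g', hg', hgg'⟩ := h.exists_eqOn_deriv_of_mem_span hg
    refine ⟨g', by rwa [Nat.cast_succ, ← add_assoc], fun s hs => ?_⟩
    have hU : IsOpen {s : ℂ | 0 < s.re} := isOpen_lt continuous_const continuous_re
    rw [iteratedDeriv_succ, (hfg.eventuallyEq_of_mem (hU.mem_nhds hs)).deriv_eq, hgg' hs]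

theorem exists_norm_le_of_mem_span (h : HasFiniteMoments μ w y) {d : ℤ} {f : ℂ → ℂ}
    (hf : f ∈ stieltjesSqSpan μ w y d) :
    ∃ C, ∀ s : ℂ, 1 ≤ s.re → ‖f s‖ ≤ C * ‖s‖ ^ (-d) := by
  induction hf using Submodule.span_induction with
  | mem f hf =>
    obtain ⟨m, k, hmk, rfl⟩ := hf
    refine ⟨∫ a, ‖w a‖ * (1 + y a) ^ (k + 1) ∂μ, fun s hs => ?_⟩
    have hs1 : 1 ≤ ‖s‖ := hs.trans (re_le_norm s)
    have hM : 0 ≤ ∫ a, ‖w a‖ * (1 + y a) ^ (k + 1) ∂μ := by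
      refine integral_nonneg_of_ae ?_
      filter_upwards [h.ae_nonneg] with a ha
      positivity
    calc ‖s ^ m * stieltjesSq μ w y k s‖
        ≤ ‖s‖ ^ m * ((∫ a, ‖w a‖ * (1 + y a) ^ (k + 1) ∂μ) * ‖s‖ ^ (-(2 * k + 2 : ℤ))) := by
          rw [norm_mul, norm_zpow]
          gcongr
          exact h.norm_stieltjesSq_le k hs
      _ = (∫ a, ‖w a‖ * (1 + y a) ^ (k + 1) ∂μ) * ‖s‖ ^ (m - (2 * k + 2)) := by
          rw [sub_eq_add_neg, zpow_add₀ (by positivity)]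
          ring
      _ ≤ (∫ a, ‖w a‖ * (1 + y a) ^ (k + 1) ∂μ) * ‖s‖ ^ (-d) :=
          mul_le_mul_of_nonneg_left (zpow_le_zpow_right₀ hs1 (by omega)) hM
  | zero => exact ⟨0, fun s _ => by simp⟩
  | add f g _ _ hf hg =>
    obtain ⟨C, hC⟩ := hf
    obtain ⟨D, hD⟩ := hg
    exact ⟨C + D, fun s hs => (norm_add_le _ _).trans (by rw [add_mul]; gcongr <;> simp_all)⟩
  | smul c f _ hf =>
    obtain ⟨C, hC⟩ := hf
    refine ⟨‖c‖ * C, fun s hs => ?_⟩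
    rw [Pi.smul_apply, norm_smul, mul_assoc]
    gcongr
    exact hC s hs

end HasFiniteMoments

end StieltjesSq

theorem setIntegral_prod_sections {α β E : Type*} [MeasurableSpace α] [MeasurableSpace β]
    [NormedAddCommGroup E] [NormedSpace ℝ E] {μ : Measure α} {ν : Measure β} [SFinite μ]
    [SFinite ν] {A : Set α} {B : α → Set β} (hA : MeasurableSet A)
    (hB : ∀ x, MeasurableSet (B x)) (hS : MeasurableSet {p : α × β | p.1 ∈ A ∧ p.2 ∈ B p.1})
    {f : α × β → E} (hf : IntegrableOn f {p | p.1 ∈ A ∧ p.2 ∈ B p.1} (μ.prod ν)) :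
    ∫ p in {p : α × β | p.1 ∈ A ∧ p.2 ∈ B p.1}, f p ∂μ.prod ν =
      ∫ x in A, ∫ y in B x, f (x, y) ∂ν ∂μ := by
  rw [← integral_indicator hS, integral_prod _ ((integrable_indicator_iff hS).2 hf),
    ← integral_indicator hA]
  congr 1
  funext x
  by_cases hx : x ∈ A
  · rw [indicator_of_mem hx, ← integral_indicator (hB x)]
    congr 1
    funext y
    by_cases hy : y ∈ B x <;> simp [indicator, hx, hy]
  · rw [indicator_of_notMem hx]
    simp [indicator, hx]

noncomputable def binetKernel (t : ℝ) : ℝ := t / (Real.exp (2 * π * t) - 1)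

@[fun_prop]
theorem measurable_binetKernel : Measurable binetKernel := by
  unfold binetKernel
  fun_prop

theorem binetKernel_nonneg (t : ℝ) : 0 ≤ binetKernel t := by
  rcases le_total 0 t with ht | ht
  · exact div_nonneg ht (sub_nonneg.2 (one_le_exp (by positivity)))
  · exact div_nonneg_of_nonpos ht (sub_nonpos.2 (exp_le_one_iff.2 (by nlinarith [pi_pos])))

theorem binetKernel_le_exp_neg {t : ℝ} (ht : 0 < t) : binetKernel t ≤ Real.exp (-2 * t) := by
  have hden : t * Real.exp (2 * t) ≤ Real.exp (2 * π * t) - 1 := by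
    have h4 : Real.exp (4 * t) ≤ Real.exp (2 * π * t) := exp_le_exp.2 (by nlinarith [pi_gt_three])
    have hsq : Real.exp (4 * t) = Real.exp (2 * t) * Real.exp (2 * t) := by
      rw [← Real.exp_add]; ring_nf
    nlinarith [add_one_le_exp (2 * t), one_le_exp (by positivity : 0 ≤ 2 * t)]
  calc binetKernel t ≤ t / (t * Real.exp (2 * t)) :=
        div_le_div_of_nonneg_left ht.le (by positivity) hden
    _ = Real.exp (-2 * t) := by rw [neg_mul, Real.exp_neg]; field_simp

def parabolicRegion : Set (ℝ × ℝ) := {p | p.1 ∈ Ioi 0 ∧ p.2 ∈ Ioc 0 (p.1 ^ 2)}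

theorem measurableSet_parabolicRegion : MeasurableSet parabolicRegion := by
  unfold parabolicRegion
  measurability

/-- The factor `(1 + y²)⁻¹` makes the bound a product of integrable functions of `t` and `y`. -/
theorem binetKernel_mul_one_add_pow_le {p : ℝ × ℝ} (hp : p ∈ parabolicRegion) (N : ℕ) :
    binetKernel p.1 * (1 + p.2) ^ N ≤
      (2 * N + 4).factorial * Real.exp 1 * (Real.exp (-p.1) * (1 + p.2 ^ 2)⁻¹) := by
  obtain ⟨t, y⟩ := p
  obtain ⟨ht, hy, hyt⟩ : 0 < t ∧ 0 < y ∧ y ≤ t ^ 2 := hp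
  have hpoly : (1 + y) ^ N * (1 + y ^ 2) ≤ ((2 * N + 4).factorial : ℝ) * Real.exp (1 + t) :=
    calc (1 + y) ^ N * (1 + y ^ 2) ≤ (1 + y) ^ N * (1 + y) ^ 2 := by gcongr; nlinarith
      _ ≤ ((1 + t) ^ 2) ^ (N + 2) := by rw [← pow_add]; gcongr; nlinarith
      _ = (1 + t) ^ (2 * N + 4) := by rw [← pow_mul]; ring_nf
      _ ≤ ((2 * N + 4).factorial : ℝ) * Real.exp (1 + t) :=
          (div_le_iff₀' (by positivity)).1 (Real.pow_div_factorial_le_exp _ (by positivity) _)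
  have hexp : Real.exp (-2 * t) * Real.exp (1 + t) = Real.exp 1 * Real.exp (-t) := by
    rw [← Real.exp_add, ← Real.exp_add]; ring_nf
  calc binetKernel t * (1 + y) ^ N
      = binetKernel t * ((1 + y) ^ N * (1 + y ^ 2)) * (1 + y ^ 2)⁻¹ := by field_simp
    _ ≤ Real.exp (-2 * t) * (((2 * N + 4).factorial : ℝ) * Real.exp (1 + t)) * (1 + y ^ 2)⁻¹ := by
        gcongr
        exact binetKernel_le_exp_neg ht
    _ = ((2 * N + 4).factorial : ℝ) * Real.exp 1 * (Real.exp (-t) * (1 + y ^ 2)⁻¹) := by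
        linear_combination (((2 * N + 4).factorial : ℝ) * (1 + y ^ 2)⁻¹) * hexp

theorem integrableOn_binetKernel_mul_one_add_pow (N : ℕ) :
    IntegrableOn (fun p : ℝ × ℝ => binetKernel p.1 * (1 + p.2) ^ N) parabolicRegion := by
  have hdom :
      IntegrableOn (fun p : ℝ × ℝ => Real.exp (-p.1) * (1 + p.2 ^ 2)⁻¹) (Ioi 0 ×ˢ univ) := by
    have := (integrableOn_exp_neg_Ioi 0).mul_prod integrable_inv_one_add_sq
    rwa [Measure.restrict_prod_eq_prod_univ] at this
  have hmeas : Measurable fun p : ℝ × ℝ => binetKernel p.1 * (1 + p.2) ^ N := by fun_prop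
  refine ((hdom.mono_set fun p hp => ⟨hp.1, mem_univ _⟩).const_mul
    ((2 * N + 4).factorial * Real.exp 1)).mono' hmeas.aestronglyMeasurable ?_
  refine (ae_restrict_iff' measurableSet_parabolicRegion).2 (ae_of_all _ fun p hp => ?_)
  have hy : 0 < p.2 := hp.2.1
  rw [Real.norm_of_nonneg (mul_nonneg (binetKernel_nonneg _) (by positivity))]
  exact binetKernel_mul_one_add_pow_le hp N

noncomputable def binetWeight (n : ℕ) (p : ℝ × ℝ) : ℂ :=
  (binetKernel p.1 : ℂ) * (p.2 : ℂ) ^ (n + 1)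

@[fun_prop]
theorem measurable_binetWeight (n : ℕ) : Measurable (binetWeight n) := by
  unfold binetWeight
  fun_prop

theorem hasFiniteMoments_binetWeight (n : ℕ) :
    HasFiniteMoments (volume.restrict parabolicRegion) (binetWeight n) Prod.snd where
  aestronglyMeasurable := (measurable_binetWeight n).aestronglyMeasurable
  aemeasurable := measurable_snd.aemeasurable
  ae_nonneg := ae_restrict_of_forall_mem measurableSet_parabolicRegion fun p hp => hp.2.1.le
  integrable_norm_mul_pow k := by
    have hmeas : Measurable fun p => ‖binetWeight n p‖ * (1 + p.2) ^ k := by fun_prop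
    refine (integrableOn_binetKernel_mul_one_add_pow (n + 1 + k)).mono'
      hmeas.aestronglyMeasurable ?_
    refine (ae_restrict_iff' measurableSet_parabolicRegion).2 (ae_of_all _ fun p hp => ?_)
    have hy : 0 < p.2 := hp.2.1
    have hg := binetKernel_nonneg p.1
    rw [Real.norm_of_nonneg (by positivity), binetWeight, norm_mul, norm_pow, norm_real, norm_real,
      Real.norm_of_nonneg hg, Real.norm_of_nonneg hy.le, pow_add (1 + p.2), ← mul_assoc]
    gcongr
    linarith

theorem hRem_eq_stieltjesSq (n : ℕ) {s : ℂ} (hs : 0 < s.re) :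
    hRem n s = (-1) ^ (n + 1) * s ^ (-(2 * (n : ℤ) + 2)) *
      stieltjesSq (volume.restrict parabolicRegion) (binetWeight n) Prod.snd 0 s := by
  have hfubini : ∫ p in parabolicRegion, binetWeight n p / ((p.2 : ℂ) + s ^ 2) ^ 1 =
      ∫ t in Ioi 0, ∫ y in Ioc 0 (t ^ 2), binetWeight n (t, y) / ((y : ℂ) + s ^ 2) ^ 1 :=
    setIntegral_prod_sections (A := Ioi 0) (B := fun t => Ioc 0 (t ^ 2)) measurableSet_Ioi
      (fun _ => measurableSet_Ioc) measurableSet_parabolicRegion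
      ((hasFiniteMoments_binetWeight n).integrable_div hs 1)
  rw [hRem, stieltjesSq, zero_add, hfubini]
  refine congrArg _ (setIntegral_congr_fun measurableSet_Ioi fun t _ => ?_)
  rw [← integral_const_mul]
  simp only [binetWeight, binetKernel, pow_one, mul_div_assoc]

/-- The double integral defining `h_{n+1}` converges absolutely for `Re(s) > 0`, the function
`h_{n+1}` is holomorphic on the half-plane `Re(s) > 0`, and each derivative satisfies
`|h_{n+1}^{(j)}(s)| = O(|s|^{−(2n+2+j)})` as `Re(s) → ∞`. -/
theorem hRem_holomorphic_decay (n : ℕ) :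
    (∀ s : ℂ, 0 < s.re →
      MeasureTheory.IntegrableOn
        (fun p : ℝ × ℝ =>
          ((p.1 / (Real.exp (2 * Real.pi * p.1) - 1) : ℝ) : ℂ) *
            ((p.2 : ℂ) ^ (n + 1) / ((p.2 : ℂ) + s ^ 2)))
        {p : ℝ × ℝ | 0 < p.1 ∧ 0 < p.2 ∧ p.2 ≤ p.1 ^ 2}) ∧
    DifferentiableOn ℂ (hRem n) {s : ℂ | 0 < s.re} ∧
    (∀ j : ℕ, ∃ C : ℝ, 0 < C ∧ ∃ σ₀ : ℝ, 0 < σ₀ ∧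
      ∀ s : ℂ, σ₀ ≤ s.re →
        ‖iteratedDeriv j (hRem n) s‖ ≤ C * ‖s‖ ^ (-(2 * (n : ℤ) + 2 + j))) := by
  have h := hasFiniteMoments_binetWeight n
  set F := stieltjesSq (volume.restrict parabolicRegion) (binetWeight n) Prod.snd
  set V := stieltjesSqSpan (volume.restrict parabolicRegion) (binetWeight n) Prod.snd
  have hmem : (-1 : ℂ) ^ (n + 1) • (fun s => s ^ (-(2 * (n : ℤ) + 2)) * F 0 s) ∈ V (2 * n + 2) :=
    Submodule.smul_mem _ _ (Submodule.subset_span ⟨_, 0, by omega, rfl⟩)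
  have hrep : EqOn (hRem n) ((-1 : ℂ) ^ (n + 1) • fun s => s ^ (-(2 * (n : ℤ) + 2)) * F 0 s)
      {s : ℂ | 0 < s.re} := fun s hs => by
    rw [hRem_eq_stieltjesSq n hs, Pi.smul_apply, smul_eq_mul, mul_assoc]
  refine ⟨fun s hs => ?_, (h.differentiableOn_of_mem_span hmem).congr hrep, fun j => ?_⟩
  · refine (h.integrable_div hs 1).congr (ae_of_all _ fun p => ?_)
    simp only [binetWeight, binetKernel, pow_one, mul_div_assoc]
  · obtain ⟨g, hg, hjg⟩ := h.exists_eqOn_iteratedDeriv ⟨_, hmem, hrep⟩ j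
    obtain ⟨C, hC⟩ := h.exists_norm_le_of_mem_span hg
    refine ⟨max C 1, by positivity, 1, one_pos, fun s hs => ?_⟩
    rw [hjg (one_pos.trans_le hs)]
    calc ‖g s‖ ≤ C * ‖s‖ ^ (-(2 * (n : ℤ) + 2 + j)) := hC s hs
      _ ≤ max C 1 * ‖s‖ ^ (-(2 * (n : ℤ) + 2 + j)) := by gcongr; exact le_max_left _ _
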